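/- arXiv:1903.09428 — 4 statements merged into one kernel-verified Lean document; each statement's English description precedes it below -/
import Mathlib

section
/- For every integer n ≥ 0 and every r ∈ (0,1), the remainder S_n(r) = J_n(r) − r^n/(2^n n!) satisfies the two-sided bound − (r^{n+2} / (2^{n+1} Γ(n+3/2) √π)) ∫_0^1 (1−t²)^{n+1/2} dt ≤ S_n(r) ≤ − (r^{n+2} cos r / (2^{n+1} Γ(n+3/2) √π)) ∫_0^1 (1−t²)^{n+1/2} dt. -/
open Real Set

/-- Bessel function of the first kind of integer order, via the Poisson integral
representation. -/
noncomputable def besselJ (n : ℕ) (r : ℝ) : ℝ :=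
  r ^ n / (2 ^ n * Real.Gamma ((n : ℝ) + 1 / 2) * Real.sqrt Real.pi) *
    ∫ t in (-1 : ℝ)..1, Real.cos (r * t) * (1 - t ^ 2) ^ ((n : ℝ) - 1 / 2)

/-- The remainder `S_n(r) = J_n(r) − r^n/(2^n n!)`. -/
noncomputable def besselS (n : ℕ) (r : ℝ) : ℝ :=
  besselJ n r - r ^ n / (2 ^ n * Nat.factorial n)

/-!
With `g = (1 - t²)^(n - 1/2)`, the normalisation `∫₋₁¹ g = √π Γ(n + 1/2) / n!` (an arcsine
integral and the recursion `(2b + 1) ∫₋₁¹ (1 - t²)^b = 2b ∫₋₁¹ (1 - t²)^(b - 1)`) cancels the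
leading term of `J_n`, leaving `S_n(r)` as a positive multiple of `∫₋₁¹ (cos (r t) - 1) g`.
For `|x| ≤ r ≤ π` one has `-x²/2 ≤ cos x - 1 ≤ -(x²/2) cos r` (the upper bound from
`tan (x/2) ≥ x/2`), so this integral lies between `-(r²/2) T` and `-(r²/2) cos r · T`, where
`T = ∫₋₁¹ t² g`. Integration by parts gives `∫₀¹ (1 - t²)^(n + 1/2) = (n + 1/2) T`.
-/

open MeasureTheory intervalIntegral

theorem intervalIntegrable_one_sub_sq_rpow_zero_one {c : ℝ} (hc : -1 < c) :
    IntervalIntegrable (fun t : ℝ => (1 - t ^ 2) ^ c) volume 0 1 := by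
  -- `(1 - t²)^c = (1 - t)^c (1 + t)^c`, an integrable singularity times a continuous factor
  have hsing : IntervalIntegrable (fun t : ℝ => (1 - t) ^ c) volume 0 1 := by
    simpa using ((intervalIntegrable_rpow' (a := 0) (b := 1) hc).comp_sub_left 1).symm
  have hreg : ContinuousOn (fun t : ℝ => (1 + t) ^ c) (uIcc 0 1) := fun t ht => by
    rw [uIcc_of_le zero_le_one] at ht
    have hpos : (0 : ℝ) < 1 + t := by linarith [ht.1]
    exact ((continuousAt_const.add continuousAt_id (x := t)).rpow_const (p := c)
      (Or.inl hpos.ne')).continuousWithinAt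
  have hprod := intervalIntegrable_iff.mp (hsing.mul_continuousOn hreg)
  refine intervalIntegrable_iff.mpr (hprod.congr_fun (fun t ht => ?_) measurableSet_uIoc)
  rw [uIoc_of_le zero_le_one] at ht
  change (1 - t) ^ c * (1 + t) ^ c = (1 - t ^ 2) ^ c
  rw [← mul_rpow (by linarith [ht.2]) (by linarith [ht.1])]
  ring_nf

theorem intervalIntegrable_one_sub_sq_rpow {c : ℝ} (hc : -1 < c) :
    IntervalIntegrable (fun t : ℝ => (1 - t ^ 2) ^ c) volume (-1) 1 := by
  have h01 := intervalIntegrable_one_sub_sq_rpow_zero_one hc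
  have h10 : IntervalIntegrable (fun t : ℝ => (1 - t ^ 2) ^ c) volume (-1) 0 := by
    simpa using ((IntervalIntegrable.iff_comp_neg (by simp)).mp h01).symm
  exact h10.trans h01

theorem intervalIntegrable_sq_mul_one_sub_sq_rpow {c : ℝ} (hc : -1 < c) :
    IntervalIntegrable (fun t : ℝ => t ^ 2 * (1 - t ^ 2) ^ c) volume (-1) 1 :=
  (intervalIntegrable_one_sub_sq_rpow hc).continuousOn_mul (continuous_pow 2).continuousOn

theorem one_sub_sq_rpow_eq_sub {b t : ℝ} (hb : b ≠ 0) (ht : t ∈ Icc (-1 : ℝ) 1) :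
    (1 - t ^ 2) ^ b = (1 - t ^ 2) ^ (b - 1) - t ^ 2 * (1 - t ^ 2) ^ (b - 1) := by
  have h : 0 ≤ 1 - t ^ 2 := by nlinarith [ht.1, ht.2]
  conv_lhs => rw [← sub_add_cancel b 1, rpow_add' h (by simpa using hb), rpow_one]
  ring

theorem integral_one_sub_sq_rpow_eq_mul_integral_sq_mul {b : ℝ} (hb : 0 < b) :
    ∫ t in (-1 : ℝ)..1, (1 - t ^ 2) ^ b =
      2 * b * ∫ t in (-1 : ℝ)..1, t ^ 2 * (1 - t ^ 2) ^ (b - 1) := by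
  have hF : ∀ t ∈ Ioo (-1 : ℝ) 1, HasDerivAt (fun t : ℝ => t * (1 - t ^ 2) ^ b)
      ((1 - t ^ 2) ^ b - 2 * b * (t ^ 2 * (1 - t ^ 2) ^ (b - 1))) t := by
    intro t ht
    have hpos : 0 < 1 - t ^ 2 := by nlinarith [ht.1, ht.2]
    refine ((hasDerivAt_id' t).mul
      (((hasDerivAt_pow 2 t).const_sub 1).rpow_const (p := b) (Or.inl hpos.ne'))).congr_deriv ?_
    push_cast
    ring
  have hFcont : Continuous fun t : ℝ => t * (1 - t ^ 2) ^ b :=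
    continuous_id.mul ((continuous_const.sub (continuous_pow 2)).rpow_const fun _ => Or.inr hb.le)
  have hg := intervalIntegrable_one_sub_sq_rpow (c := b) (by linarith)
  have hsq := (intervalIntegrable_sq_mul_one_sub_sq_rpow (c := b - 1) (by linarith)).const_mul
    (2 * b)
  have hFTC :=
    integral_eq_sub_of_hasDerivAt_of_le (by norm_num) hFcont.continuousOn hF (hg.sub hsq)
  rw [integral_sub hg hsq, intervalIntegral.integral_const_mul] at hFTC
  norm_num [zero_rpow hb.ne'] at hFTC
  linarith

theorem two_mul_add_one_mul_integral_one_sub_sq_rpow {b : ℝ} (hb : 0 < b) :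
    (2 * b + 1) * ∫ t in (-1 : ℝ)..1, (1 - t ^ 2) ^ b =
      2 * b * ∫ t in (-1 : ℝ)..1, (1 - t ^ 2) ^ (b - 1) := by
  have hsplit : ∫ t in (-1 : ℝ)..1, (1 - t ^ 2) ^ b =
      (∫ t in (-1 : ℝ)..1, (1 - t ^ 2) ^ (b - 1)) -
        ∫ t in (-1 : ℝ)..1, t ^ 2 * (1 - t ^ 2) ^ (b - 1) := by
    rw [← integral_sub (intervalIntegrable_one_sub_sq_rpow (by linarith))
      (intervalIntegrable_sq_mul_one_sub_sq_rpow (by linarith))]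
    refine integral_congr fun t ht => one_sub_sq_rpow_eq_sub hb.ne' ?_
    rwa [uIcc_of_le (by norm_num)] at ht
  linear_combination 2 * b * hsplit + integral_one_sub_sq_rpow_eq_mul_integral_sq_mul hb

theorem integral_one_sub_sq_rpow_neg_half :
    ∫ t in (-1 : ℝ)..1, (1 - t ^ 2) ^ (-(1 / 2) : ℝ) = π := by
  have hderiv : ∀ t ∈ Ioo (-1 : ℝ) 1, HasDerivAt arcsin ((1 - t ^ 2) ^ (-(1 / 2) : ℝ)) t := by
    intro t ht
    rw [rpow_neg (by nlinarith [ht.1, ht.2]), ← sqrt_eq_rpow, ← one_div]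
    exact hasDerivAt_arcsin ht.1.ne' ht.2.ne
  rw [integral_eq_sub_of_hasDerivAt_of_le (by norm_num) continuous_arcsin.continuousOn hderiv
    (intervalIntegrable_one_sub_sq_rpow (by norm_num)), arcsin_one, arcsin_neg_one]
  ring

theorem integral_one_sub_sq_rpow_nat_sub_half (n : ℕ) :
    ∫ t in (-1 : ℝ)..1, (1 - t ^ 2) ^ ((n : ℝ) - 1 / 2) =
      √π * Gamma ((n : ℝ) + 1 / 2) / n.factorial := by
  induction n with
  | zero =>
    norm_num [integral_one_sub_sq_rpow_neg_half, Gamma_one_half_eq, mul_self_sqrt pi_pos.le]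
  | succ n ih =>
    have hb : (0 : ℝ) < n + 1 / 2 := by positivity
    have hrec := two_mul_add_one_mul_integral_one_sub_sq_rpow hb
    rw [show (n : ℝ) + 1 / 2 - 1 = n - 1 / 2 by ring, ih] at hrec
    rw [show ((n + 1 : ℕ) : ℝ) - 1 / 2 = n + 1 / 2 by push_cast; ring,
      show ((n + 1 : ℕ) : ℝ) + 1 / 2 = (n + 1 / 2) + 1 by push_cast; ring,
      Gamma_add_one hb.ne', Nat.factorial_succ]
    -- opaque names, so that `field_simp` does not rewrite inside the integral and `Gamma`
    set W := ∫ t in (-1 : ℝ)..1, (1 - t ^ 2) ^ ((n : ℝ) + 1 / 2)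
    set G := Gamma ((n : ℝ) + 1 / 2)
    push_cast
    field_simp at hrec ⊢
    linear_combination hrec

theorem integral_one_sub_sq_rpow_eq_two_mul {c : ℝ} (hc : 0 ≤ c) :
    ∫ t in (-1 : ℝ)..1, (1 - t ^ 2) ^ c = 2 * ∫ t in (0 : ℝ)..1, (1 - t ^ 2) ^ c := by
  have hcont : Continuous fun t : ℝ => (1 - t ^ 2) ^ c :=
    (continuous_const.sub (continuous_pow 2)).rpow_const fun _ => Or.inr hc
  have hsymm : ∫ t in (-1 : ℝ)..0, (1 - t ^ 2) ^ c = ∫ t in (0 : ℝ)..1, (1 - t ^ 2) ^ c := by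
    have := integral_comp_neg (a := 0) (b := 1) fun t : ℝ => (1 - t ^ 2) ^ c
    simp only [neg_sq, neg_zero] at this
    exact this.symm
  rw [← integral_add_adjacent_intervals (hcont.intervalIntegrable (-1) 0)
    (hcont.intervalIntegrable 0 1), hsymm, two_mul]

theorem integral_zero_one_one_sub_sq_rpow {b : ℝ} (hb : 0 < b) :
    ∫ t in (0 : ℝ)..1, (1 - t ^ 2) ^ b =
      b * ∫ t in (-1 : ℝ)..1, t ^ 2 * (1 - t ^ 2) ^ (b - 1) := by
  have h := integral_one_sub_sq_rpow_eq_mul_integral_sq_mul hb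
  rw [integral_one_sub_sq_rpow_eq_two_mul hb.le] at h
  linarith

theorem sq_mul_cos_sq_le_sin_sq {y : ℝ} (hy : |y| ≤ π / 2) : y ^ 2 * cos y ^ 2 ≤ sin y ^ 2 := by
  rw [← sq_abs y, sin_sq, ← cos_abs y, ← sin_sq, ← mul_pow]
  rcases hy.lt_or_eq with hlt | heq
  · have hcos : 0 < cos |y| := cos_pos_of_mem_Ioo ⟨by linarith [abs_nonneg y, pi_pos], hlt⟩
    have htan := le_tan (abs_nonneg y) hlt
    rw [tan_eq_sin_div_cos, le_div_iff₀ hcos] at htan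
    exact pow_le_pow_left₀ (by positivity) htan 2
  · simp [heq]

theorem sq_div_two_mul_cos_le_one_sub_cos {x : ℝ} (hx : |x| ≤ π) :
    x ^ 2 / 2 * cos x ≤ 1 - cos x := by
  -- `1 - cos x = 2 sin²(x/2) ≥ (x²/2) cos²(x/2) ≥ (x²/2) cos x`
  have hhalf := sq_mul_cos_sq_le_sin_sq (y := x / 2) (by rw [abs_div, abs_two]; linarith)
  have hcos : cos x = 2 * cos (x / 2) ^ 2 - 1 := by rw [← cos_two_mul]; ring_nf
  rw [hcos]
  nlinarith [sin_sq_add_cos_sq (x / 2), sq_nonneg (x * sin (x / 2))]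

theorem cos_sub_one_le_neg_sq_div_two_mul_cos {r x : ℝ} (hr : r ≤ π) (hx : |x| ≤ r) :
    cos x - 1 ≤ -(x ^ 2 / 2 * cos r) := by
  have hmono : cos r ≤ cos x := by
    rw [← cos_abs x]
    exact cos_le_cos_of_nonneg_of_le_pi (abs_nonneg x) hr hx
  nlinarith [sq_div_two_mul_cos_le_one_sub_cos (hx.trans hr), sq_nonneg x]

theorem intervalIntegrable_cos_mul_sub_one_mul_one_sub_sq_rpow {c : ℝ} (hc : -1 < c) (r : ℝ) :
    IntervalIntegrable (fun t : ℝ => (cos (r * t) - 1) * (1 - t ^ 2) ^ c) volume (-1) 1 :=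
  (intervalIntegrable_one_sub_sq_rpow hc).continuousOn_mul (by fun_prop)

theorem neg_mul_integral_sq_mul_le_integral_cos_mul_sub_one_mul {c : ℝ} (hc : -1 < c) (r : ℝ) :
    -(r ^ 2 / 2) * ∫ t in (-1 : ℝ)..1, t ^ 2 * (1 - t ^ 2) ^ c ≤
      ∫ t in (-1 : ℝ)..1, (cos (r * t) - 1) * (1 - t ^ 2) ^ c := by
  rw [← intervalIntegral.integral_const_mul]
  refine integral_mono_on (by norm_num)
    ((intervalIntegrable_sq_mul_one_sub_sq_rpow hc).const_mul _)
    (intervalIntegrable_cos_mul_sub_one_mul_one_sub_sq_rpow hc r) fun t ht => ?_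
  have hg : 0 ≤ (1 - t ^ 2) ^ c := rpow_nonneg (by nlinarith [ht.1, ht.2]) c
  have := mul_le_mul_of_nonneg_right (one_sub_sq_div_two_le_cos (x := r * t)) hg
  linarith

theorem integral_cos_mul_sub_one_mul_le_neg_mul_integral_sq_mul {c r : ℝ} (hc : -1 < c)
    (hr₀ : 0 ≤ r) (hr : r ≤ π) :
    ∫ t in (-1 : ℝ)..1, (cos (r * t) - 1) * (1 - t ^ 2) ^ c ≤
      -(r ^ 2 / 2 * cos r) * ∫ t in (-1 : ℝ)..1, t ^ 2 * (1 - t ^ 2) ^ c := by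
  rw [← intervalIntegral.integral_const_mul]
  refine integral_mono_on (by norm_num)
    (intervalIntegrable_cos_mul_sub_one_mul_one_sub_sq_rpow hc r)
    ((intervalIntegrable_sq_mul_one_sub_sq_rpow hc).const_mul _) fun t ht => ?_
  have hg : 0 ≤ (1 - t ^ 2) ^ c := rpow_nonneg (by nlinarith [ht.1, ht.2]) c
  have hrt : |r * t| ≤ r := by
    rw [abs_mul, abs_of_nonneg hr₀]
    exact mul_le_of_le_one_right hr₀ (abs_le.mpr ht)
  have := mul_le_mul_of_nonneg_right (cos_sub_one_le_neg_sq_div_two_mul_cos hr hrt) hg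
  linarith

theorem besselS_eq_integral (n : ℕ) (r : ℝ) :
    besselS n r = r ^ n / (2 ^ n * Gamma ((n : ℝ) + 1 / 2) * √π) *
      ∫ t in (-1 : ℝ)..1, (cos (r * t) - 1) * (1 - t ^ 2) ^ ((n : ℝ) - 1 / 2) := by
  have hg := intervalIntegrable_one_sub_sq_rpow (c := (n : ℝ) - 1 / 2)
    (by linarith [n.cast_nonneg (α := ℝ)])
  simp_rw [sub_mul, one_mul]
  rw [integral_sub (hg.continuousOn_mul (by fun_prop)) hg, integral_one_sub_sq_rpow_nat_sub_half,
    besselS, besselJ]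
  field_simp

theorem bessel_remainder_bound (n : ℕ) (r : ℝ) (hr : r ∈ Set.Ioo (0 : ℝ) 1) :
    -(r ^ (n + 2) / (2 ^ (n + 1) * Real.Gamma ((n : ℝ) + 3 / 2) * Real.sqrt Real.pi)) *
        ∫ t in (0 : ℝ)..1, (1 - t ^ 2) ^ ((n : ℝ) + 1 / 2) ≤ besselS n r ∧
      besselS n r ≤
        -(r ^ (n + 2) * Real.cos r /
            (2 ^ (n + 1) * Real.Gamma ((n : ℝ) + 3 / 2) * Real.sqrt Real.pi)) *
          ∫ t in (0 : ℝ)..1, (1 - t ^ 2) ^ ((n : ℝ) + 1 / 2) := by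
  obtain ⟨hr₀, hr₁⟩ := hr
  have hb : (0 : ℝ) < n + 1 / 2 := by positivity
  have hc : (-1 : ℝ) < n - 1 / 2 := by linarith
  set T := ∫ t in (-1 : ℝ)..1, t ^ 2 * (1 - t ^ 2) ^ ((n : ℝ) - 1 / 2)
  set K := r ^ n / (2 ^ n * Gamma ((n : ℝ) + 1 / 2) * √π) with hK_def
  have hK : 0 ≤ K := by positivity
  have hhalf : ∫ t in (0 : ℝ)..1, (1 - t ^ 2) ^ ((n : ℝ) + 1 / 2) = (n + 1 / 2) * T := by
    rw [integral_zero_one_one_sub_sq_rpow hb, show (n : ℝ) + 1 / 2 - 1 = n - 1 / 2 by ring]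
  have hΓ : Gamma ((n : ℝ) + 3 / 2) = (n + 1 / 2) * Gamma ((n : ℝ) + 1 / 2) := by
    rw [← Gamma_add_one hb.ne']
    ring_nf
  rw [hhalf, hΓ, besselS_eq_integral]
  constructor
  · calc _ = K * (-(r ^ 2 / 2) * T) := by rw [hK_def]; field_simp; ring
      _ ≤ _ := mul_le_mul_of_nonneg_left
          (neg_mul_integral_sq_mul_le_integral_cos_mul_sub_one_mul hc r) hK
  · calc _ ≤ K * (-(r ^ 2 / 2 * cos r) * T) :=
          mul_le_mul_of_nonneg_left (integral_cos_mul_sub_one_mul_le_neg_mul_integral_sq_mul hc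
            hr₀.le (by linarith [pi_gt_three])) hK
      _ = _ := by rw [hK_def]; field_simp; ring
end

section
/- For every integer n ≥ 0 and every r ∈ (0,1), the derivative of the Bessel function J_{n+1} satisfies 0 < r^n/(2^{n+2} n!) ≤ J_{n+1}'(r) ≤ r^n/(2^{n+1} n!). -/
/-!
Put `w(t) = (1 - t²)^(n + 1/2)` and `W = ∫₋₁¹ w`. Integrating by parts gives
`∫ t² w = W / (2n + 4)`, which yields a Wallis-type recursion identifying the normalising
constant of `J_{n+1}` as `2^(n+1) (n+1)! W`. Differentiating under the integral sign,
`J_{n+1}'(r) = r^n / (2^(n+1) (n+1)! W) · ∫ ((n+1) cos(rt) - rt sin(rt)) w(t) dt`.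
For `|x| ≤ 1` the kernel satisfies `(n+1) - (n+3) x²/2 ≤ (n+1) cos x - x sin x ≤ n+1`, so,
using the value of `∫ t² w`, the integral lies between `(n+1) W / 2` and `(n+1) W`.
-/

open Real Set

open intervalIntegral

section Weight

variable {p : ℝ}

lemma continuous_one_sub_sq_rpow (hp : 0 ≤ p) : Continuous fun t : ℝ => (1 - t ^ 2) ^ p :=
  (continuous_rpow_const hp).comp (by fun_prop)

lemma one_sub_sq_nonneg_of_mem_Icc {t : ℝ} (ht : t ∈ Icc (-1 : ℝ) 1) : 0 ≤ 1 - t ^ 2 := by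
  nlinarith [ht.1, ht.2]

lemma integral_one_sub_sq_rpow_add_one_eq_sub (hp : 0 ≤ p) :
    ∫ t in (-1 : ℝ)..1, (1 - t ^ 2) ^ (p + 1) =
      (∫ t in (-1 : ℝ)..1, (1 - t ^ 2) ^ p) -
        ∫ t in (-1 : ℝ)..1, t ^ 2 * (1 - t ^ 2) ^ p := by
  rw [← integral_sub ((continuous_one_sub_sq_rpow hp).intervalIntegrable _ _)
    ((by fun_prop : Continuous fun t : ℝ => t ^ 2 * (1 - t ^ 2) ^ p).intervalIntegrable _ _)]
  refine integral_congr fun t ht => ?_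
  rw [uIcc_of_le (by norm_num)] at ht
  rw [rpow_add_one' (one_sub_sq_nonneg_of_mem_Icc ht) (by linarith)]
  ring

/-- Integration by parts against `t ↦ t`, using `d/dt (1 - t²)^(p+1) = -2(p+1) t (1 - t²)^p`. -/
lemma integral_sq_mul_one_sub_sq_rpow_eq_integral_rpow_add_one (hp : 0 ≤ p) :
    ∫ t in (-1 : ℝ)..1, t ^ 2 * (1 - t ^ 2) ^ p =
      (2 * p + 2)⁻¹ * ∫ t in (-1 : ℝ)..1, (1 - t ^ 2) ^ (p + 1) := by
  set v : ℝ → ℝ := fun t => -(2 * p + 2)⁻¹ * (1 - t ^ 2) ^ (p + 1)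
  have hv : ∀ x, HasDerivAt v (x * (1 - x ^ 2) ^ p) x := fun x => by
    have h := ((hasDerivAt_pow 2 x).const_sub 1).rpow_const (p := p + 1) (Or.inr (by linarith))
    refine (h.const_mul (-(2 * p + 2)⁻¹)).congr_deriv ?_
    rw [add_sub_cancel_right]
    field_simp
    ring
  have hv1 : ∀ x : ℝ, x ^ 2 = 1 → v x = 0 := fun x hx => by
    simp only [v, hx, sub_self, zero_rpow (by linarith : p + 1 ≠ 0), mul_zero]
  have ibp := integral_mul_deriv_eq_deriv_mul (a := -1) (b := 1) (u := id) (u' := fun _ => 1)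
    (fun x _ => hasDerivAt_id x) (fun x _ => hv x) intervalIntegrable_const
    ((continuous_id.mul (continuous_one_sub_sq_rpow hp)).intervalIntegrable _ _)
  simp only [id, hv1 1 (by norm_num), hv1 (-1) (by norm_num), mul_zero, sub_zero, one_mul] at ibp
  simp only [v, ← mul_assoc, ← sq, integral_const_mul] at ibp
  linarith

lemma integral_sq_mul_one_sub_sq_rpow (hp : 0 ≤ p) :
    ∫ t in (-1 : ℝ)..1, t ^ 2 * (1 - t ^ 2) ^ p =
      (2 * p + 3)⁻¹ * ∫ t in (-1 : ℝ)..1, (1 - t ^ 2) ^ p := by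
  have h := integral_sq_mul_one_sub_sq_rpow_eq_integral_rpow_add_one hp
  rw [integral_one_sub_sq_rpow_add_one_eq_sub hp] at h
  field_simp at h ⊢
  linarith

lemma integral_one_sub_sq_rpow_add_one (hp : 0 ≤ p) :
    ∫ t in (-1 : ℝ)..1, (1 - t ^ 2) ^ (p + 1) =
      (2 * p + 2) / (2 * p + 3) * ∫ t in (-1 : ℝ)..1, (1 - t ^ 2) ^ p := by
  rw [integral_one_sub_sq_rpow_add_one_eq_sub hp, integral_sq_mul_one_sub_sq_rpow hp]
  field_simp
  ring

end Weight

lemma integral_one_sub_sq_rpow_nat_add_half (n : ℕ) :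
    ∫ t in (-1 : ℝ)..1, (1 - t ^ 2) ^ ((n : ℝ) + 1 / 2) =
      √π * Gamma ((n : ℝ) + 1 + 1 / 2) / (n + 1).factorial := by
  induction n with
  | zero =>
    have h : ∫ t in (-1 : ℝ)..1, (1 - t ^ 2) ^ ((0 : ℝ) + 1 / 2) = π / 2 := by
      simp only [zero_add, ← sqrt_eq_rpow, integral_sqrt_one_sub_sq]
    have hs : √π * √π = π := mul_self_sqrt pi_pos.le
    rw [Nat.cast_zero, h, zero_add, add_comm, Gamma_add_one (by norm_num), Gamma_one_half_eq]
    simp only [zero_add, Nat.factorial_one, Nat.cast_one]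
    linear_combination -hs / 2
  | succ n ih =>
    rw [Nat.cast_succ, add_right_comm, integral_one_sub_sq_rpow_add_one (by positivity), ih,
      show (n : ℝ) + 1 + 1 + 1 / 2 = n + 1 + 1 / 2 + 1 by ring, Gamma_add_one (by positivity),
      Nat.factorial_succ (n + 1)]
    push_cast
    field_simp
    ring

noncomputable def poissonIntegral (p r : ℝ) : ℝ :=
  ∫ t in (-1 : ℝ)..1, cos (r * t) * (1 - t ^ 2) ^ p

section Poisson

variable {p : ℝ}

lemma hasDerivAt_poissonIntegral (hp : 0 ≤ p) (r : ℝ) :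
    HasDerivAt (poissonIntegral p)
      (∫ t in (-1 : ℝ)..1, -t * sin (r * t) * (1 - t ^ 2) ^ p) r := by
  have hF : ∀ x, Continuous fun t : ℝ => cos (x * t) * (1 - t ^ 2) ^ p := fun x => by fun_prop
  refine (hasDerivAt_integral_of_dominated_loc_of_deriv_le (bound := fun t => |(1 - t ^ 2) ^ p|)
    (F' := fun x t => -t * sin (x * t) * (1 - t ^ 2) ^ p) Filter.univ_mem
    (.of_forall fun x => (hF x).aestronglyMeasurable) ((hF r).intervalIntegrable _ _)
    (by fun_prop : Continuous fun t : ℝ =>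
      -t * sin (r * t) * (1 - t ^ 2) ^ p).aestronglyMeasurable
    (.of_forall fun t ht x _ => ?_) ((continuous_one_sub_sq_rpow hp).abs.intervalIntegrable _ _)
    (.of_forall fun t _ x _ => ?_)).2
  · rw [uIoc_of_le (by norm_num)] at ht
    have ht' : |t| ≤ 1 := abs_le.mpr ⟨ht.1.le, ht.2⟩
    rw [norm_mul, norm_mul, norm_neg, Real.norm_eq_abs, Real.norm_eq_abs, Real.norm_eq_abs]
    exact mul_le_of_le_one_left (abs_nonneg _) (mul_le_one₀ ht' (abs_nonneg _) (abs_sin_le_one _))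
  · refine (((hasDerivAt_mul_const t).cos).mul_const _).congr_deriv ?_
    ring

lemma hasDerivAt_pow_succ_mul_poissonIntegral (k : ℕ) (hp : 0 ≤ p) (r : ℝ) :
    HasDerivAt (fun x => x ^ (k + 1) * poissonIntegral p x)
      (r ^ k * ∫ t in (-1 : ℝ)..1,
        ((k + 1) * cos (r * t) - r * t * sin (r * t)) * (1 - t ^ 2) ^ p) r := by
  refine ((hasDerivAt_pow (k + 1) r).mul (hasDerivAt_poissonIntegral hp r)).congr_deriv ?_
  have hsplit :
      ∫ t in (-1 : ℝ)..1, ((k + 1) * cos (r * t) - r * t * sin (r * t)) * (1 - t ^ 2) ^ p =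
        ∫ t in (-1 : ℝ)..1, ((k + 1) * (cos (r * t) * (1 - t ^ 2) ^ p) +
          r * (-t * sin (r * t) * (1 - t ^ 2) ^ p)) := integral_congr fun t _ => by ring
  rw [hsplit, integral_add
      ((by fun_prop : Continuous fun t : ℝ =>
        (k + 1) * (cos (r * t) * (1 - t ^ 2) ^ p)).intervalIntegrable _ _)
      ((by fun_prop : Continuous fun t : ℝ =>
        r * (-t * sin (r * t) * (1 - t ^ 2) ^ p)).intervalIntegrable _ _),
    integral_const_mul, integral_const_mul, poissonIntegral, Nat.add_sub_cancel]
  push_cast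
  ring

end Poisson

section Kernel

variable {m : ℝ}

lemma mul_sin_nonneg_of_abs_le_pi {x : ℝ} (hx : |x| ≤ π) : 0 ≤ x * sin x := by
  rcases le_total 0 x with hx0 | hx0
  · exact mul_nonneg hx0 (sin_nonneg_of_nonneg_of_le_pi hx0 (le_of_abs_le hx))
  · have h := sin_nonneg_of_nonneg_of_le_pi (neg_nonneg.mpr hx0) (by linarith [(abs_le.mp hx).1])
    rw [sin_neg] at h
    nlinarith

lemma mul_cos_sub_mul_sin_le (hm : 0 ≤ m) {x : ℝ} (hx : |x| ≤ π) :
    m * cos x - x * sin x ≤ m := by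
  nlinarith [cos_le_one x, mul_sin_nonneg_of_abs_le_pi hx]

lemma sub_mul_sq_le_mul_cos_sub_mul_sin (hm : 0 ≤ m) (x : ℝ) :
    m - (m + 2) / 2 * x ^ 2 ≤ m * cos x - x * sin x := by
  have hsin : x * sin x ≤ x ^ 2 := by
    calc x * sin x ≤ |x| * |sin x| := by rw [← abs_mul]; exact le_abs_self _
      _ ≤ |x| * |x| := mul_le_mul_of_nonneg_left abs_sin_le_abs (abs_nonneg x)
      _ = x ^ 2 := by rw [abs_mul_abs_self, sq]
  nlinarith [one_sub_sq_div_two_le_cos (x := x)]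

variable {p : ℝ}

lemma integral_mul_cos_sub_mul_sin_le (hm : 0 ≤ m) (hp : 0 ≤ p) {r : ℝ} (hr : |r| ≤ π) :
    ∫ t in (-1 : ℝ)..1, (m * cos (r * t) - r * t * sin (r * t)) * (1 - t ^ 2) ^ p ≤
      m * ∫ t in (-1 : ℝ)..1, (1 - t ^ 2) ^ p := by
  rw [← integral_const_mul]
  refine integral_mono_on (by norm_num) ((by fun_prop : Continuous fun t : ℝ =>
    (m * cos (r * t) - r * t * sin (r * t)) * (1 - t ^ 2) ^ p).intervalIntegrable _ _)
    ((by fun_prop : Continuous fun t : ℝ => m * (1 - t ^ 2) ^ p).intervalIntegrable _ _)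
    fun t ht => ?_
  have ht' : |r * t| ≤ π := by
    rw [abs_mul]
    exact mul_le_of_le_one_right (abs_nonneg r) (abs_le.mpr ht) |>.trans hr
  exact mul_le_mul_of_nonneg_right (mul_cos_sub_mul_sin_le hm ht')
    (rpow_nonneg (one_sub_sq_nonneg_of_mem_Icc ht) p)

lemma le_integral_mul_cos_sub_mul_sin (hm : 0 ≤ m) (hp : 0 ≤ p) (r : ℝ) :
    (m - (m + 2) / 2 * r ^ 2 / (2 * p + 3)) * ∫ t in (-1 : ℝ)..1, (1 - t ^ 2) ^ p ≤
      ∫ t in (-1 : ℝ)..1, (m * cos (r * t) - r * t * sin (r * t)) * (1 - t ^ 2) ^ p := by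
  have hlhs : (m - (m + 2) / 2 * r ^ 2 / (2 * p + 3)) * ∫ t in (-1 : ℝ)..1, (1 - t ^ 2) ^ p =
      ∫ t in (-1 : ℝ)..1,
        (m * (1 - t ^ 2) ^ p - (m + 2) / 2 * r ^ 2 * (t ^ 2 * (1 - t ^ 2) ^ p)) := by
    rw [integral_sub
      ((by fun_prop : Continuous fun t : ℝ => m * (1 - t ^ 2) ^ p).intervalIntegrable _ _)
      ((by fun_prop : Continuous fun t : ℝ =>
        (m + 2) / 2 * r ^ 2 * (t ^ 2 * (1 - t ^ 2) ^ p)).intervalIntegrable _ _),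
      integral_const_mul, integral_const_mul,
      integral_sq_mul_one_sub_sq_rpow hp]
    ring
  rw [hlhs]
  refine integral_mono_on (by norm_num) ((by fun_prop : Continuous fun t : ℝ =>
    m * (1 - t ^ 2) ^ p - (m + 2) / 2 * r ^ 2 * (t ^ 2 * (1 - t ^ 2) ^ p)).intervalIntegrable _ _)
    ((by fun_prop : Continuous fun t : ℝ =>
      (m * cos (r * t) - r * t * sin (r * t)) * (1 - t ^ 2) ^ p).intervalIntegrable _ _)
    fun t ht => ?_
  have hw := rpow_nonneg (one_sub_sq_nonneg_of_mem_Icc ht) p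
  nlinarith [mul_le_mul_of_nonneg_right (sub_mul_sq_le_mul_cos_sub_mul_sin hm (r * t)) hw]

end Kernel

lemma integral_one_sub_sq_rpow_nat_add_half_pos (n : ℕ) :
    0 < ∫ t in (-1 : ℝ)..1, (1 - t ^ 2) ^ ((n : ℝ) + 1 / 2) := by
  rw [integral_one_sub_sq_rpow_nat_add_half]
  have : 0 < Gamma ((n : ℝ) + 1 + 1 / 2) := Gamma_pos_of_pos (by positivity)
  positivity

lemma half_mul_integral_le_integral_mul_cos_sub_mul_sin (n : ℕ) {r : ℝ} (hr : |r| ≤ 1) :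
    ((n : ℝ) + 1) / 2 * ∫ t in (-1 : ℝ)..1, (1 - t ^ 2) ^ ((n : ℝ) + 1 / 2) ≤
      ∫ t in (-1 : ℝ)..1,
        ((n + 1) * cos (r * t) - r * t * sin (r * t)) * (1 - t ^ 2) ^ ((n : ℝ) + 1 / 2) := by
  have hr2 : r ^ 2 ≤ 1 := by rw [← sq_abs]; exact pow_le_one₀ (abs_nonneg r) hr
  have hcorr : (n + 1 + 2) / 2 * r ^ 2 / (2 * (n + 1 / 2) + 3) ≤ (1 / 2 : ℝ) := by
    rw [div_le_iff₀ (by positivity)]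
    nlinarith [mul_le_mul_of_nonneg_left hr2 (by positivity : (0 : ℝ) ≤ n + 3)]
  refine le_trans ?_ (le_integral_mul_cos_sub_mul_sin (by positivity) (by positivity) r)
  gcongr ?_ * _
  · exact (integral_one_sub_sq_rpow_nat_add_half_pos n).le
  · linarith [(n.cast_nonneg : (0 : ℝ) ≤ n)]

lemma besselJ_succ_eq (n : ℕ) :
    besselJ (n + 1) = fun r => r ^ (n + 1) * poissonIntegral ((n : ℝ) + 1 / 2) r /
      (2 ^ (n + 1) * (n + 1).factorial *
        ∫ t in (-1 : ℝ)..1, (1 - t ^ 2) ^ ((n : ℝ) + 1 / 2)) := by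
  funext r
  have hΓ : Gamma ((n : ℝ) + 1 + 1 / 2) * √π =
      (n + 1).factorial * ∫ t in (-1 : ℝ)..1, (1 - t ^ 2) ^ ((n : ℝ) + 1 / 2) := by
    rw [integral_one_sub_sq_rpow_nat_add_half]
    field_simp
  rw [besselJ, poissonIntegral, Nat.cast_succ, add_sub_assoc,
    show (1 : ℝ) - 1 / 2 = 1 / 2 by norm_num, mul_assoc (2 ^ (n + 1)), hΓ]
  ring

lemma hasDerivAt_besselJ_succ (n : ℕ) (r : ℝ) :
    HasDerivAt (besselJ (n + 1))
      (r ^ n * (∫ t in (-1 : ℝ)..1,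
          ((n + 1) * cos (r * t) - r * t * sin (r * t)) * (1 - t ^ 2) ^ ((n : ℝ) + 1 / 2)) /
        (2 ^ (n + 1) * (n + 1).factorial *
          ∫ t in (-1 : ℝ)..1, (1 - t ^ 2) ^ ((n : ℝ) + 1 / 2))) r := by
  rw [besselJ_succ_eq]
  exact_mod_cast (hasDerivAt_pow_succ_mul_poissonIntegral n (by positivity) r).div_const _

theorem bessel_deriv_two_sided_bound (n : ℕ) (r : ℝ) (hr : r ∈ Set.Ioo (0 : ℝ) 1) :
    0 < r ^ n / (2 ^ (n + 2) * Nat.factorial n) ∧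
      r ^ n / (2 ^ (n + 2) * Nat.factorial n) ≤ deriv (besselJ (n + 1)) r ∧
      deriv (besselJ (n + 1)) r ≤ r ^ n / (2 ^ (n + 1) * Nat.factorial n) := by
  obtain ⟨hr0, hr1⟩ := hr
  have hr : |r| ≤ 1 := by rw [abs_of_pos hr0]; exact hr1.le
  have hJ' := hasDerivAt_besselJ_succ n r
  set W := ∫ t in (-1 : ℝ)..1, (1 - t ^ 2) ^ ((n : ℝ) + 1 / 2)
  set S := ∫ t in (-1 : ℝ)..1,
    ((n + 1) * cos (r * t) - r * t * sin (r * t)) * (1 - t ^ 2) ^ ((n : ℝ) + 1 / 2)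
  have hW : 0 < W := integral_one_sub_sq_rpow_nat_add_half_pos n
  have hupper : S ≤ (n + 1) * W :=
    integral_mul_cos_sub_mul_sin_le (by positivity) (by positivity)
      (hr.trans (by linarith [pi_gt_three]))
  have hlower : (n + 1) / 2 * W ≤ S := half_mul_integral_le_integral_mul_cos_sub_mul_sin n hr
  have hderiv : deriv (besselJ (n + 1)) r =
      r ^ n / (2 ^ (n + 1) * n.factorial) * (S / ((n + 1) * W)) := by
    rw [hJ'.deriv, Nat.factorial_succ]
    push_cast
    field_simp
  rw [hderiv]
  refine ⟨by positivity, ?_, ?_⟩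
  · calc r ^ n / (2 ^ (n + 2) * n.factorial) = r ^ n / (2 ^ (n + 1) * n.factorial) * (1 / 2) := by
          ring
      _ ≤ _ := by
          refine mul_le_mul_of_nonneg_left ?_ (by positivity)
          rw [le_div_iff₀ (by positivity)]
          linarith
  · exact mul_le_of_le_one_right (by positivity) ((div_le_one (by positivity)).2 hupper)
end

section
/- For n ∈ {0, 2} and all real numbers r, s with 0 < r ≤ s < 1, ∫_0^1 (cos(r t) − cos(s t)) (1−t²)^{n−1/2} dt ≤ π (s² − r²) / (28n + 8). -/
/-!
Substituting `t = sin θ` turns the weight `(1 - t²)^(n - 1/2) dt` into `cos θ ^ (2n) dθ`. Since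
`x ↦ cos x + x²/2` is increasing on `[0, ∞)`, `cos (r t) - cos (s t) ≤ (s² - r²) t² / 2`, so the
integral is at most `(s² - r²)/2 · ∫₀^{π/2} sin² θ cos^{2n} θ dθ`, a Wallis integral equal to
`π/8` for `n = 0` and `π/64` for `n = 2`.
-/

open Real Set MeasureTheory intervalIntegral

lemma mul_sq_rpow_natCast_sub_half {x : ℝ} (hx : 0 < x) (n : ℕ) :
    x * (x ^ 2) ^ ((n : ℝ) - 1 / 2) = x ^ (2 * n) := by
  rw [← rpow_natCast_mul hx.le, show ((2 : ℕ) : ℝ) * (n - 1 / 2) = ((2 * n : ℕ) : ℝ) - 1 by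
    push_cast; ring, rpow_sub_one hx.ne', rpow_natCast]
  field_simp

lemma sin_image_Ioo_zero_pi_div_two : sin '' Ioo 0 (π / 2) = Ioo 0 1 := by
  ext y
  constructor
  · rintro ⟨x, ⟨hx0, hx1⟩, rfl⟩
    exact ⟨sin_pos_of_pos_of_lt_pi hx0 (by linarith [pi_pos]),
      sin_pi_div_two ▸ sin_lt_sin_of_lt_of_le_pi_div_two (by linarith) le_rfl hx1⟩
  · rintro ⟨hy0, hy1⟩
    exact ⟨arcsin y, ⟨arcsin_pos.2 hy0, arcsin_lt_pi_div_two.2 hy1⟩,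
      sin_arcsin (by linarith) hy1.le⟩

theorem integral_mul_one_sub_sq_rpow_eq (g : ℝ → ℝ) (n : ℕ) :
    ∫ t in (0 : ℝ)..1, g t * (1 - t ^ 2) ^ ((n : ℝ) - 1 / 2) =
      ∫ θ in (0 : ℝ)..π / 2, g (sin θ) * cos θ ^ (2 * n) := by
  rw [integral_of_le zero_le_one, integral_of_le (by positivity), integral_Ioc_eq_integral_Ioo,
    integral_Ioc_eq_integral_Ioo, ← sin_image_Ioo_zero_pi_div_two,
    integral_image_eq_integral_abs_deriv_smul measurableSet_Ioo
      (fun θ _ => (hasDerivAt_sin θ).hasDerivWithinAt)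
      (injOn_sin.mono (Ioo_subset_Icc_self.trans (Icc_subset_Icc (by linarith [pi_pos]) le_rfl)))]
  refine setIntegral_congr_fun measurableSet_Ioo fun θ hθ => ?_
  have hcos : 0 < cos θ := cos_pos_of_mem_Ioo ⟨by linarith [hθ.1, pi_pos], hθ.2⟩
  rw [smul_eq_mul, abs_of_pos hcos, ← cos_sq', ← mul_sq_rpow_natCast_sub_half hcos n]
  ring

theorem integral_cos_pow_add_two_zero_pi_div_two (n : ℕ) :
    ∫ x in (0 : ℝ)..π / 2, cos x ^ (n + 2) =
      (n + 1) / (n + 2) * ∫ x in (0 : ℝ)..π / 2, cos x ^ n := by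
  simpa [zero_pow n.succ_ne_zero] using integral_cos_pow (a := 0) (b := π / 2) (n := n)

theorem integral_sin_sq_mul_cos_pow (n : ℕ) :
    ∫ x in (0 : ℝ)..π / 2, sin x ^ 2 * cos x ^ n =
      (∫ x in (0 : ℝ)..π / 2, cos x ^ n) / (n + 2) := by
  have hint (m : ℕ) : IntervalIntegrable (fun x => cos x ^ m) volume 0 (π / 2) :=
    (continuous_cos.pow m).intervalIntegrable _ _
  calc ∫ x in (0 : ℝ)..π / 2, sin x ^ 2 * cos x ^ n
      = ∫ x in (0 : ℝ)..π / 2, (cos x ^ n - cos x ^ (n + 2)) :=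
        integral_congr fun x _ => by simp only [sin_sq]; ring
    _ = (∫ x in (0 : ℝ)..π / 2, cos x ^ n) / (n + 2) := by
        rw [intervalIntegral.integral_sub (hint n) (hint (n + 2)),
          integral_cos_pow_add_two_zero_pi_div_two]
        field_simp
        ring

lemma cos_sub_cos_le {r s : ℝ} (hr : 0 ≤ r) (hrs : r ≤ s) {t : ℝ} (ht : 0 ≤ t) :
    cos (r * t) - cos (s * t) ≤ (s ^ 2 - r ^ 2) / 2 * t ^ 2 := by
  have hle : r * t ≤ s * t := mul_le_mul_of_nonneg_right hrs ht
  calc cos (r * t) - cos (s * t) = ∫ x in r * t..s * t, sin x := integral_sin.symm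
    _ ≤ ∫ x in r * t..s * t, x :=
      integral_mono_on hle (continuous_sin.intervalIntegrable _ _)
        (continuous_id.intervalIntegrable _ _)
        fun x hx => sin_le ((mul_nonneg hr ht).trans hx.1)
    _ = (s ^ 2 - r ^ 2) / 2 * t ^ 2 := by rw [integral_id]; ring

theorem integral_cos_sub_cos_bound_general (n : ℕ) (hn : n = 0 ∨ n = 2) (r s : ℝ)
    (hr : 0 < r) (hrs : r ≤ s) :
    ∫ t in (0 : ℝ)..1, (Real.cos (r * t) - Real.cos (s * t)) * (1 - t ^ 2) ^ ((n : ℝ) - 1 / 2) ≤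
      Real.pi * (s ^ 2 - r ^ 2) / (28 * n + 8) := by
  have hsin {θ : ℝ} (hθ : θ ∈ Icc 0 (π / 2)) : 0 ≤ sin θ :=
    sin_nonneg_of_nonneg_of_le_pi hθ.1 (by linarith [hθ.2, pi_pos])
  calc _ = ∫ θ in (0 : ℝ)..π / 2, (cos (r * sin θ) - cos (s * sin θ)) * cos θ ^ (2 * n) :=
        integral_mul_one_sub_sq_rpow_eq (fun t => cos (r * t) - cos (s * t)) n
    _ ≤ ∫ θ in (0 : ℝ)..π / 2, (s ^ 2 - r ^ 2) / 2 * (sin θ ^ 2 * cos θ ^ (2 * n)) := by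
        refine integral_mono_on pi_div_two_pos.le
          (Continuous.intervalIntegrable (by fun_prop) _ _)
          (Continuous.intervalIntegrable (by fun_prop) _ _) fun θ hθ => ?_
        rw [← mul_assoc]
        exact mul_le_mul_of_nonneg_right (cos_sub_cos_le hr.le hrs (hsin hθ))
          ((even_two_mul n).pow_nonneg _)
    _ = (s ^ 2 - r ^ 2) / 2 * ((∫ θ in (0 : ℝ)..π / 2, cos θ ^ (2 * n)) / (2 * n + 2)) := by
        rw [intervalIntegral.integral_const_mul, integral_sin_sq_mul_cos_pow]
        push_cast
        rfl
    _ = π * (s ^ 2 - r ^ 2) / (28 * n + 8) := by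
        rcases hn with rfl | rfl
        · norm_num
          ring
        · rw [integral_cos_pow_add_two_zero_pi_div_two 2,
            integral_cos_pow_add_two_zero_pi_div_two 0]
          norm_num
          ring

theorem integral_cos_sub_cos_bound (n : ℕ) (hn : n = 0 ∨ n = 2) (r s : ℝ)
    (hr : 0 < r) (hrs : r ≤ s) (hs : s < 1) :
    ∫ t in (0 : ℝ)..1, (Real.cos (r * t) - Real.cos (s * t)) * (1 - t ^ 2) ^ ((n : ℝ) - 1 / 2) ≤
      Real.pi * (s ^ 2 - r ^ 2) / (28 * n + 8) :=
  integral_cos_sub_cos_bound_general n hn r s hr hrs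
end

section
/- Let γ ∈ (0,1] and b_1, b_2 ∈ (0,1), and set b = min{b_1, b_2}. Then |b_1 − b_2| ≤ (15 / (2 γ b³)) · |F(b_1,γ) − F(b_2,γ)|. Since |F(b_1,γ) − F(b_2,γ)| is a lower bound for ‖Λ_{q_1} − Λ_{q_2}‖ for the one-step potentials q_i = γ χ_{(0,b_i)}(|x|), this gives Lipschitz stability of the discontinuity radius with respect to the DtN map when the height γ is fixed and b_1, b_2 ≥ b_0 > 0. -/
/-!
With `s = √γ`, `P(b) = J₀(bs)` and `B(b) = b² J₂(bs)` one has `F(b,γ) = (P - B) / (P + B)`, so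
`F(b₁,γ) - F(b₂,γ) = 2 (P₁B₂ - P₂B₁) / ((P₁ + B₁)(P₂ + B₂))`. In the Poisson integrals
`J₀(r) = π⁻¹ ∫ cos(rt) (1-t²)^(-1/2) dt` and `J₂(r) = r² (3π)⁻¹ ∫ cos(rt) (1-t²)^(3/2) dt`, the
bounds `1 - u²/2 ≤ cos u ≤ 1` and `|cos u - cos v| ≤ |u - v|`, together with the moments of the
weights (the arcsine integral and the Wallis recursion), give `3/4 ≤ J₀(r) ≤ 1` and
`11/96 ≤ J₂(r)/r² ≤ 1/8` for `|r| ≤ 1`, and Lipschitz constants `1` and `1/8` for `J₀` and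
`J₂(r)/r²`. Since `B(b) = γ b⁴ · J₂(bs)/(bs)²` grows like `b⁴`, for `b₁ ≤ b₂` the numerator is at
least `γ b₁³ (b₂ - b₁) / 4`, while the denominator is at most `(9/8)²`; and `(1/4)(8/9)² ≥ 2/15`.
-/

open Real Set

/-- `F(b,γ)`, the first eigenvalue `c₁(b,γ)` of the Dirichlet-to-Neumann map for the
one-step radial potential `q = γ χ_{(0,b)}(|x|)` on the unit disk. -/
noncomputable def dtnF (b γ : ℝ) : ℝ :=
  (besselJ 0 (b * Real.sqrt γ) - b ^ 2 * besselJ 2 (b * Real.sqrt γ)) /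
    (besselJ 0 (b * Real.sqrt γ) + b ^ 2 * besselJ 2 (b * Real.sqrt γ))

open MeasureTheory intervalIntegral

noncomputable def cosTransform (w : ℝ → ℝ) (r : ℝ) : ℝ :=
  ∫ t in (-1 : ℝ)..1, cos (r * t) * w t

section CosTransform

variable {w : ℝ → ℝ} (hw : IntervalIntegrable w volume (-1) 1)
  (hw0 : ∀ t ∈ Icc (-1 : ℝ) 1, 0 ≤ w t)
include hw

theorem intervalIntegrable_cos_mul (r : ℝ) :
    IntervalIntegrable (fun t => cos (r * t) * w t) volume (-1) 1 :=
  hw.continuousOn_mul (by fun_prop)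

theorem intervalIntegrable_sq_mul :
    IntervalIntegrable (fun t => t ^ 2 * w t) volume (-1) 1 :=
  hw.continuousOn_mul (by fun_prop)

include hw0

theorem cosTransform_le_integral (r : ℝ) : cosTransform w r ≤ ∫ t in (-1 : ℝ)..1, w t := by
  refine integral_mono_on (by norm_num) (intervalIntegrable_cos_mul hw r) hw fun t ht => ?_
  simpa using mul_le_mul_of_nonneg_right (cos_le_one (r * t)) (hw0 t ht)

theorem integral_sub_le_cosTransform (r : ℝ) :
    (∫ t in (-1 : ℝ)..1, w t) - r ^ 2 / 2 * ∫ t in (-1 : ℝ)..1, t ^ 2 * w t ≤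
      cosTransform w r := by
  rw [← intervalIntegral.integral_const_mul,
    ← integral_sub hw ((intervalIntegrable_sq_mul hw).const_mul _)]
  refine integral_mono_on (by norm_num) (hw.sub ((intervalIntegrable_sq_mul hw).const_mul _))
    (intervalIntegrable_cos_mul hw r) fun t ht => ?_
  have := mul_le_mul_of_nonneg_right (one_sub_sq_div_two_le_cos (x := r * t)) (hw0 t ht)
  linarith

theorem abs_cosTransform_sub_le (x y : ℝ) :
    |cosTransform w x - cosTransform w y| ≤ |x - y| * ∫ t in (-1 : ℝ)..1, w t := by
  rw [cosTransform, cosTransform, ← integral_sub (intervalIntegrable_cos_mul hw x)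
    (intervalIntegrable_cos_mul hw y), ← intervalIntegral.integral_const_mul, ← Real.norm_eq_abs]
  refine norm_integral_le_of_norm_le (by norm_num) (ae_of_all _ fun t ht => ?_)
    (hw.const_mul _)
  have ht' : |t| ≤ 1 := abs_le.2 ⟨ht.1.le, ht.2⟩
  calc ‖cos (x * t) * w t - cos (y * t) * w t‖ = |cos (x * t) - cos (y * t)| * w t := by
        rw [← sub_mul, Real.norm_eq_abs, abs_mul, abs_of_nonneg (hw0 t ⟨ht.1.le, ht.2⟩)]
    _ ≤ |x - y| * w t := by
        refine mul_le_mul_of_nonneg_right ?_ (hw0 t ⟨ht.1.le, ht.2⟩)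
        calc |cos (x * t) - cos (y * t)| ≤ |x * t - y * t| := abs_cos_sub_cos_le _ _
          _ = |x - y| * |t| := by rw [← sub_mul, abs_mul]
          _ ≤ |x - y| := mul_le_of_le_one_right (abs_nonneg _) ht'

end CosTransform

noncomputable def poissonWeight (c t : ℝ) : ℝ := (1 - t ^ 2) ^ c

section PoissonWeight

theorem poissonWeight_nonneg (c : ℝ) {t : ℝ} (ht : t ∈ Icc (-1 : ℝ) 1) :
    0 ≤ poissonWeight c t :=
  rpow_nonneg (by nlinarith [ht.1, ht.2]) c

theorem intervalIntegrable_poissonWeight {c : ℝ} (hc : 0 ≤ c) :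
    IntervalIntegrable (poissonWeight c) volume (-1) 1 :=
  (Continuous.rpow_const (by fun_prop) fun _ => Or.inr hc).intervalIntegrable _ _

theorem poissonWeight_neg_half : poissonWeight (-1 / 2) = fun t => √((1 - t ^ 2)⁻¹) := by
  ext t
  rcases le_or_gt 0 (1 - t ^ 2) with h | h
  · rw [poissonWeight, neg_div, rpow_neg h, sqrt_eq_rpow, inv_rpow h]
  · rw [poissonWeight, sqrt_eq_zero_of_nonpos (inv_lt_zero.2 h).le, rpow_def_of_neg h]
    simp [neg_div, inv_mul_eq_div]

theorem intervalIntegrable_poissonWeight_neg_half :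
    IntervalIntegrable (poissonWeight (-1 / 2)) volume (-1) 1 := by
  rw [poissonWeight_neg_half]
  exact Polynomial.Chebyshev.intervalIntegrable_sqrt_one_sub_sq_inv

theorem integral_poissonWeight_neg_half : ∫ t in (-1 : ℝ)..1, poissonWeight (-1 / 2) t = π := by
  have := Polynomial.Chebyshev.integral_eval_T_real_measureT_zero
  rw [Polynomial.Chebyshev.integral_measureT] at this
  simpa [poissonWeight_neg_half] using this

theorem integral_poissonWeight_half : ∫ t in (-1 : ℝ)..1, poissonWeight (1 / 2) t = π / 2 := by
  simp_rw [poissonWeight, ← sqrt_eq_rpow, integral_sqrt_one_sub_sq]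

theorem sq_mul_poissonWeight {c : ℝ} (hc : c + 1 ≠ 0) {t : ℝ} (ht : t ∈ Icc (-1 : ℝ) 1) :
    t ^ 2 * poissonWeight c t = poissonWeight c t - poissonWeight (c + 1) t := by
  rcases (show 0 ≤ 1 - t ^ 2 by nlinarith [ht.1, ht.2]).eq_or_lt with h | h
  · rw [poissonWeight, poissonWeight, ← h, zero_rpow hc, sub_zero, show t ^ 2 = 1 by linarith,
      one_mul]
  · rw [poissonWeight, poissonWeight, rpow_add h, rpow_one]
    ring

theorem integral_sq_mul_poissonWeight {c : ℝ} (hc : -1 < c)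
    (hi : IntervalIntegrable (poissonWeight c) volume (-1) 1) :
    ∫ t in (-1 : ℝ)..1, t ^ 2 * poissonWeight c t =
      (∫ t in (-1 : ℝ)..1, poissonWeight c t) - ∫ t in (-1 : ℝ)..1, poissonWeight (c + 1) t := by
  rw [← integral_sub hi (intervalIntegrable_poissonWeight (by linarith))]
  refine integral_congr fun t ht => sq_mul_poissonWeight (by linarith) ?_
  rwa [uIcc_of_le (by norm_num)] at ht

theorem hasDerivAt_mul_poissonWeight {c : ℝ} (hc : 0 ≤ c) (t : ℝ) :
    HasDerivAt (fun u => u * poissonWeight (c + 1) u)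
      (poissonWeight (c + 1) t - 2 * (c + 1) * (t ^ 2 * poissonWeight c t)) t := by
  have hw : HasDerivAt (fun u => poissonWeight (c + 1) u)
      (-(2 * t) * (c + 1) * poissonWeight c t) t := by
    simpa [poissonWeight] using
      ((hasDerivAt_pow 2 t).const_sub 1).rpow_const (p := c + 1) (Or.inr (by linarith))
  exact ((hasDerivAt_id' t).mul hw).congr_deriv (by ring)

theorem integral_poissonWeight_add_one {c : ℝ} (hc : 0 ≤ c) :
    (2 * c + 3) * ∫ t in (-1 : ℝ)..1, poissonWeight (c + 1) t =
      (2 * c + 2) * ∫ t in (-1 : ℝ)..1, poissonWeight c t := by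
  have hi := intervalIntegrable_poissonWeight hc
  have hi₁ := intervalIntegrable_poissonWeight (c := c + 1) (by linarith)
  have hftc := integral_eq_sub_of_hasDerivAt (fun t _ => hasDerivAt_mul_poissonWeight hc t)
    (hi₁.sub ((intervalIntegrable_sq_mul hi).const_mul _))
  rw [integral_sub hi₁ ((intervalIntegrable_sq_mul hi).const_mul _),
    intervalIntegral.integral_const_mul, integral_sq_mul_poissonWeight (by linarith) hi] at hftc
  simp [poissonWeight, zero_rpow (by linarith : c + 1 ≠ 0)] at hftc ⊢
  linarith

theorem integral_poissonWeight_three_halves :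
    ∫ t in (-1 : ℝ)..1, poissonWeight (3 / 2) t = 3 * π / 8 := by
  have h := integral_poissonWeight_add_one (c := 1 / 2) (by norm_num)
  rw [integral_poissonWeight_half] at h
  norm_num at h
  linarith

theorem integral_poissonWeight_five_halves :
    ∫ t in (-1 : ℝ)..1, poissonWeight (5 / 2) t = 5 * π / 16 := by
  have h := integral_poissonWeight_add_one (c := 3 / 2) (by norm_num)
  rw [integral_poissonWeight_three_halves] at h
  norm_num at h
  linarith

theorem integral_sq_mul_poissonWeight_neg_half :
    ∫ t in (-1 : ℝ)..1, t ^ 2 * poissonWeight (-1 / 2) t = π / 2 := by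
  rw [integral_sq_mul_poissonWeight (by norm_num) intervalIntegrable_poissonWeight_neg_half,
    show (-1 / 2 : ℝ) + 1 = 1 / 2 by norm_num, integral_poissonWeight_neg_half,
    integral_poissonWeight_half]
  ring

theorem integral_sq_mul_poissonWeight_three_halves :
    ∫ t in (-1 : ℝ)..1, t ^ 2 * poissonWeight (3 / 2) t = π / 16 := by
  rw [integral_sq_mul_poissonWeight (by norm_num) (intervalIntegrable_poissonWeight (by norm_num)),
    show (3 / 2 : ℝ) + 1 = 5 / 2 by norm_num, integral_poissonWeight_three_halves,
    integral_poissonWeight_five_halves]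
  ring

end PoissonWeight

noncomputable def besselJTwoDivSq (r : ℝ) : ℝ := cosTransform (poissonWeight (3 / 2)) r / (3 * π)

section Bessel

theorem besselJ_zero_eq (r : ℝ) : besselJ 0 r = cosTransform (poissonWeight (-1 / 2)) r / π := by
  rw [besselJ, cosTransform]
  norm_num [Gamma_one_half_eq, mul_self_sqrt pi_pos.le, poissonWeight, neg_div]
  ring

theorem besselJ_two_eq_sq_mul (r : ℝ) : besselJ 2 r = r ^ 2 * besselJTwoDivSq r := by
  have hΓ : Gamma ((2 : ℕ) + 1 / 2) = 3 / 4 * √π := by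
    rw [show ((2 : ℕ) : ℝ) + 1 / 2 = 1 / 2 + 1 + 1 by norm_num, Gamma_add_one (by norm_num),
      Gamma_add_one (by norm_num), Gamma_one_half_eq]
    ring
  rw [besselJ, hΓ, besselJTwoDivSq, cosTransform]
  norm_num [poissonWeight]
  field_simp
  rw [sq_sqrt pi_pos.le]
  ring

theorem besselJ_zero_le_one (r : ℝ) : besselJ 0 r ≤ 1 := by
  have h := cosTransform_le_integral intervalIntegrable_poissonWeight_neg_half
    (fun _ => poissonWeight_nonneg _) r
  rw [integral_poissonWeight_neg_half] at h
  rw [besselJ_zero_eq, div_le_one pi_pos]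
  exact h

theorem one_sub_sq_div_four_le_besselJ_zero (r : ℝ) : 1 - r ^ 2 / 4 ≤ besselJ 0 r := by
  have h := integral_sub_le_cosTransform intervalIntegrable_poissonWeight_neg_half
    (fun _ => poissonWeight_nonneg _) r
  rw [integral_poissonWeight_neg_half, integral_sq_mul_poissonWeight_neg_half] at h
  rw [besselJ_zero_eq, le_div_iff₀ pi_pos]
  linarith

theorem abs_besselJ_zero_sub_le (x y : ℝ) : |besselJ 0 x - besselJ 0 y| ≤ |x - y| := by
  have h := abs_cosTransform_sub_le intervalIntegrable_poissonWeight_neg_half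
    (fun _ => poissonWeight_nonneg _) x y
  rw [integral_poissonWeight_neg_half] at h
  rw [besselJ_zero_eq, besselJ_zero_eq, ← sub_div, abs_div, abs_of_pos pi_pos,
    div_le_iff₀ pi_pos]
  exact h

theorem besselJTwoDivSq_le (r : ℝ) : besselJTwoDivSq r ≤ 1 / 8 := by
  have h := cosTransform_le_integral (intervalIntegrable_poissonWeight (c := 3 / 2) (by norm_num))
    (fun _ => poissonWeight_nonneg _) r
  rw [integral_poissonWeight_three_halves] at h
  rw [besselJTwoDivSq, div_le_iff₀ (by positivity)]
  linarith

theorem le_besselJTwoDivSq (r : ℝ) : 1 / 8 - r ^ 2 / 96 ≤ besselJTwoDivSq r := by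
  have h := integral_sub_le_cosTransform
    (intervalIntegrable_poissonWeight (c := 3 / 2) (by norm_num))
    (fun _ => poissonWeight_nonneg _) r
  rw [integral_poissonWeight_three_halves, integral_sq_mul_poissonWeight_three_halves] at h
  rw [besselJTwoDivSq, le_div_iff₀ (by positivity)]
  linarith

theorem three_quarters_le_besselJ_zero {r : ℝ} (hr : r ^ 2 ≤ 1) : 3 / 4 ≤ besselJ 0 r := by
  linarith [one_sub_sq_div_four_le_besselJ_zero r]

theorem le_besselJTwoDivSq_of_sq_le_one {r : ℝ} (hr : r ^ 2 ≤ 1) :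
    11 / 96 ≤ besselJTwoDivSq r := by
  linarith [le_besselJTwoDivSq r]

theorem abs_besselJTwoDivSq_sub_le (x y : ℝ) :
    |besselJTwoDivSq x - besselJTwoDivSq y| ≤ |x - y| / 8 := by
  have h := abs_cosTransform_sub_le
    (intervalIntegrable_poissonWeight (c := 3 / 2) (by norm_num))
    (fun _ => poissonWeight_nonneg _) x y
  rw [integral_poissonWeight_three_halves] at h
  rw [besselJTwoDivSq, besselJTwoDivSq, ← sub_div, abs_div,
    abs_of_pos (by positivity : (0 : ℝ) < 3 * π), div_le_iff₀ (by positivity)]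
  linarith

end Bessel

section DtnF

variable {s b₁ b₂ : ℝ}

theorem sq_mul_besselJ_two_eq (b s : ℝ) :
    b ^ 2 * besselJ 2 (b * s) = s ^ 2 * b ^ 4 * besselJTwoDivSq (b * s) := by
  rw [besselJ_two_eq_sq_mul]
  ring

theorem le_sq_mul_besselJ_two_sub (hs : 0 ≤ s) (hs1 : s ≤ 1) (hb₁ : 0 ≤ b₁) (h12 : b₁ ≤ b₂)
    (hb₂ : b₂ ≤ 1) :
    s ^ 2 * b₁ ^ 3 * (b₂ - b₁) / 3 ≤ b₂ ^ 2 * besselJ 2 (b₂ * s) - b₁ ^ 2 * besselJ 2 (b₁ * s) := by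
  have hb₂0 : 0 ≤ b₂ := hb₁.trans h12
  have hK₂ := le_besselJTwoDivSq_of_sq_le_one
    (pow_le_one₀ (mul_nonneg hb₂0 hs) (mul_le_one₀ hb₂ hs hs1))
  have hK : besselJTwoDivSq (b₁ * s) - besselJTwoDivSq (b₂ * s) ≤ s * (b₂ - b₁) / 8 := by
    have h := abs_besselJTwoDivSq_sub_le (b₁ * s) (b₂ * s)
    rw [← sub_mul, abs_mul, abs_sub_comm b₁, abs_of_nonneg (sub_nonneg.2 h12),
      abs_of_nonneg hs] at h
    linarith [le_abs_self (besselJTwoDivSq (b₁ * s) - besselJTwoDivSq (b₂ * s))]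
  have hsb : s * b₁ ≤ 1 := mul_le_one₀ hs1 hb₁ (h12.trans hb₂)
  have h4 : 4 * b₁ ^ 3 * (b₂ - b₁) ≤ b₂ ^ 4 - b₁ ^ 4 := by
    nlinarith [mul_nonneg (mul_nonneg hb₁ hb₁) (sub_nonneg.2 h12),
      mul_nonneg (mul_nonneg hb₁ hb₂0) (sub_nonneg.2 h12),
      mul_nonneg (mul_nonneg hb₂0 hb₂0) (sub_nonneg.2 h12)]
  have hgrowth :
      4 * b₁ ^ 3 * (b₂ - b₁) * (11 / 96) ≤ (b₂ ^ 4 - b₁ ^ 4) * besselJTwoDivSq (b₂ * s) :=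
    mul_le_mul h4 hK₂ (by norm_num) (sub_nonneg.2 (pow_le_pow_left₀ hb₁ h12 4))
  have hshift : b₁ ^ 4 * (besselJTwoDivSq (b₁ * s) - besselJTwoDivSq (b₂ * s)) ≤
      b₁ ^ 3 * (b₂ - b₁) / 8 :=
    calc _ ≤ b₁ ^ 4 * (s * (b₂ - b₁) / 8) := mul_le_mul_of_nonneg_left hK (by positivity)
      _ = s * b₁ * (b₁ ^ 3 * (b₂ - b₁) / 8) := by ring
      _ ≤ b₁ ^ 3 * (b₂ - b₁) / 8 :=
        mul_le_of_le_one_left (by have := sub_nonneg.2 h12; positivity) hsb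
  rw [sq_mul_besselJ_two_eq, sq_mul_besselJ_two_eq]
  linear_combination mul_le_mul_of_nonneg_left (sub_le_sub hgrowth hshift) (sq_nonneg s)

theorem sq_mul_besselJ_two_nonneg {b s : ℝ} (hbs : (b * s) ^ 2 ≤ 1) :
    0 ≤ b ^ 2 * besselJ 2 (b * s) := by
  rw [sq_mul_besselJ_two_eq]
  have := le_besselJTwoDivSq_of_sq_le_one hbs
  positivity

theorem sq_mul_besselJ_two_le (b s : ℝ) : b ^ 2 * besselJ 2 (b * s) ≤ s ^ 2 * b ^ 4 / 8 := by
  rw [sq_mul_besselJ_two_eq]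
  linear_combination
    mul_le_mul_of_nonneg_left (besselJTwoDivSq_le (b * s)) (by positivity : 0 ≤ s ^ 2 * b ^ 4)

theorem le_besselJ_zero_mul_sub (hs : 0 ≤ s) (hs1 : s ≤ 1) (hb₁ : 0 ≤ b₁) (h12 : b₁ ≤ b₂)
    (hb₂ : b₂ ≤ 1) :
    s ^ 2 * b₁ ^ 3 * (b₂ - b₁) / 8 ≤
      besselJ 0 (b₁ * s) * (b₂ ^ 2 * besselJ 2 (b₂ * s)) -
        besselJ 0 (b₂ * s) * (b₁ ^ 2 * besselJ 2 (b₁ * s)) := by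
  have hx : (b₁ * s) ^ 2 ≤ 1 := pow_le_one₀ (by positivity) (mul_le_one₀ (h12.trans hb₂) hs hs1)
  have hP₁ := three_quarters_le_besselJ_zero hx
  have hP : besselJ 0 (b₂ * s) - besselJ 0 (b₁ * s) ≤ s * (b₂ - b₁) := by
    have h := abs_besselJ_zero_sub_le (b₂ * s) (b₁ * s)
    rw [← sub_mul, abs_mul, abs_of_nonneg (sub_nonneg.2 h12), abs_of_nonneg hs] at h
    linarith [le_abs_self (besselJ 0 (b₂ * s) - besselJ 0 (b₁ * s))]
  have hB := le_sq_mul_besselJ_two_sub hs hs1 hb₁ h12 hb₂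
  have hB₁ := sq_mul_besselJ_two_nonneg hx
  have hδ : 0 ≤ s ^ 2 * b₁ ^ 3 * (b₂ - b₁) := by have := sub_nonneg.2 h12; positivity
  have hmain : s ^ 2 * b₁ ^ 3 * (b₂ - b₁) / 3 * (3 / 4) ≤
      besselJ 0 (b₁ * s) * (b₂ ^ 2 * besselJ 2 (b₂ * s) - b₁ ^ 2 * besselJ 2 (b₁ * s)) := by
    rw [mul_comm (besselJ 0 _)]
    exact mul_le_mul hB hP₁ (by norm_num) (by linarith)
  have hshift : b₁ ^ 2 * besselJ 2 (b₁ * s) * (besselJ 0 (b₂ * s) - besselJ 0 (b₁ * s)) ≤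
      s ^ 2 * b₁ ^ 3 * (b₂ - b₁) / 8 :=
    calc _ ≤ b₁ ^ 2 * besselJ 2 (b₁ * s) * (s * (b₂ - b₁)) := mul_le_mul_of_nonneg_left hP hB₁
      _ ≤ s ^ 2 * b₁ ^ 4 / 8 * (s * (b₂ - b₁)) :=
          mul_le_mul_of_nonneg_right (sq_mul_besselJ_two_le b₁ s)
            (mul_nonneg hs (sub_nonneg.2 h12))
      _ = s * b₁ * (s ^ 2 * b₁ ^ 3 * (b₂ - b₁) / 8) := by ring
      _ ≤ s ^ 2 * b₁ ^ 3 * (b₂ - b₁) / 8 :=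
        mul_le_of_le_one_left (by positivity) (mul_le_one₀ hs1 hb₁ (h12.trans hb₂))
  linarith

theorem besselJ_zero_add_sq_mul_besselJ_two_mem_Icc {b s : ℝ} (hb : 0 ≤ b) (hb1 : b ≤ 1)
    (hs : 0 ≤ s) (hs1 : s ≤ 1) :
    besselJ 0 (b * s) + b ^ 2 * besselJ 2 (b * s) ∈ Icc (3 / 4) (9 / 8) := by
  have hbs : (b * s) ^ 2 ≤ 1 := pow_le_one₀ (by positivity) (mul_le_one₀ hb1 hs hs1)
  have : s ^ 2 * b ^ 4 ≤ 1 := mul_le_one₀ (pow_le_one₀ hs hs1) (by positivity) (pow_le_one₀ hb hb1)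
  constructor
  · linarith [three_quarters_le_besselJ_zero hbs, sq_mul_besselJ_two_nonneg hbs]
  · linarith [besselJ_zero_le_one (b * s), sq_mul_besselJ_two_le b s]

theorem mul_sub_le_dtnF_sub {γ : ℝ} (hγ : 0 ≤ γ) (hγ1 : γ ≤ 1) (hb₁ : 0 ≤ b₁) (h12 : b₁ ≤ b₂)
    (hb₂ : b₂ ≤ 1) : 2 * γ * b₁ ^ 3 / 15 * (b₂ - b₁) ≤ dtnF b₁ γ - dtnF b₂ γ := by
  have hs : 0 ≤ √γ := sqrt_nonneg γ
  have hs1 : √γ ≤ 1 := sqrt_le_one.2 hγ1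
  obtain ⟨hD₁, hD₁'⟩ :=
    besselJ_zero_add_sq_mul_besselJ_two_mem_Icc hb₁ (h12.trans hb₂) hs hs1
  obtain ⟨hD₂, hD₂'⟩ :=
    besselJ_zero_add_sq_mul_besselJ_two_mem_Icc (hb₁.trans h12) hb₂ hs hs1
  have hN := le_besselJ_zero_mul_sub hs hs1 hb₁ h12 hb₂
  rw [sq_sqrt hγ] at hN
  have hδ : 0 ≤ γ * b₁ ^ 3 * (b₂ - b₁) := by have := sub_nonneg.2 h12; positivity
  calc 2 * γ * b₁ ^ 3 / 15 * (b₂ - b₁) = 2 / 15 * (γ * b₁ ^ 3 * (b₂ - b₁)) := by ring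
    _ ≤ 16 / 81 * (γ * b₁ ^ 3 * (b₂ - b₁)) := mul_le_mul_of_nonneg_right (by norm_num) hδ
    _ = 2 * (γ * b₁ ^ 3 * (b₂ - b₁) / 8) / (9 / 8 * (9 / 8)) := by ring
    _ ≤ 2 * (besselJ 0 (b₁ * √γ) * (b₂ ^ 2 * besselJ 2 (b₂ * √γ)) -
          besselJ 0 (b₂ * √γ) * (b₁ ^ 2 * besselJ 2 (b₁ * √γ))) /
        ((besselJ 0 (b₁ * √γ) + b₁ ^ 2 * besselJ 2 (b₁ * √γ)) *
          (besselJ 0 (b₂ * √γ) + b₂ ^ 2 * besselJ 2 (b₂ * √γ))) := by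
        gcongr
        linarith
    _ = dtnF b₁ γ - dtnF b₂ γ := by
        rw [dtnF, dtnF, div_sub_div _ _ (by linarith) (by linarith)]
        ring

end DtnF

theorem lipschitz_stability_fixed_height (γ b₁ b₂ : ℝ) (hγ : γ ∈ Set.Ioc (0 : ℝ) 1)
    (hb₁ : b₁ ∈ Set.Ioo (0 : ℝ) 1) (hb₂ : b₂ ∈ Set.Ioo (0 : ℝ) 1) :
    |b₁ - b₂| ≤ 15 / (2 * γ * (min b₁ b₂) ^ 3) * |dtnF b₁ γ - dtnF b₂ γ| := by
  wlog h12 : b₁ ≤ b₂ generalizing b₁ b₂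
  · simpa only [min_comm, abs_sub_comm] using this b₂ b₁ hb₂ hb₁ (le_of_not_ge h12)
  have hF := mul_sub_le_dtnF_sub hγ.1.le hγ.2 hb₁.1.le h12 hb₂.2.le
  have hγb : 0 < 2 * γ * b₁ ^ 3 := mul_pos (mul_pos two_pos hγ.1) (pow_pos hb₁.1 3)
  rw [min_eq_left h12, abs_sub_comm, abs_of_nonneg (sub_nonneg.2 h12), div_mul_eq_mul_div,
    le_div_iff₀ hγb]
  calc (b₂ - b₁) * (2 * γ * b₁ ^ 3) = 15 * (2 * γ * b₁ ^ 3 / 15 * (b₂ - b₁)) := by ring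
    _ ≤ 15 * |dtnF b₁ γ - dtnF b₂ γ| := by grw [hF, ← le_abs_self]
end
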